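/- For all words u, v ∈ L*: Δ̄₀(u ⧢₀ v) − Δ̄₀(u) ⧢₀ Δ̄₀(v) ∈ L_- ⊗ ℚ⟨L⟩ + ℚ⟨L⟩ ⊗ L_-. -/

import Mathlib

open scoped TensorProduct

/-- The two-letter alphabet `L = {d, y}`. -/
inductive Letter : Type
  | d : Letter
  | y : Letter
deriving DecidableEq

/-- `ℚ⟨L⟩`, the ℚ-vector space with basis the words on `L`; with the concatenation
product it is the free noncommutative ℚ-algebra on `L`. -/
abbrev V : Type := MonoidAlgebra ℚ (FreeMonoid Letter)

/-- The basis vector corresponding to a word. -/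
noncomputable def wrd (w : List Letter) : V :=
  MonoidAlgebra.single (FreeMonoid.ofList w) (1 : ℚ)

/-- The (a priori neither commutative nor associative) product `⧢₀` on basis words,
defined recursively by (P1) `e ⧢₀ w = w ⧢₀ e = w`;
(P2) `(yu) ⧢₀ v = u ⧢₀ (yv) = y(u ⧢₀ v)`;
(P3₀) `(du) ⧢₀ (dv) = d(u ⧢₀ (dv)) − u ⧢₀ (ddv)`. -/
noncomputable def shW0 : List Letter → List Letter → V
  | [], v => wrd v
  | u@(_ :: _), [] => wrd u
  | (Letter.y :: u), v => wrd [Letter.y] * shW0 u v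
  | (Letter.d :: u), (Letter.y :: v) => wrd [Letter.y] * shW0 (Letter.d :: u) v
  | (Letter.d :: u), (Letter.d :: v) =>
      wrd [Letter.d] * shW0 u (Letter.d :: v) - shW0 u (Letter.d :: Letter.d :: v)
termination_by u v => 2 * (u.length + v.length) + u.length

/-- The ℚ-bilinear extension of `⧢₀` to `ℚ⟨L⟩`. -/
noncomputable def shL0 : V →ₗ[ℚ] V →ₗ[ℚ] V :=
  (Finsupp.lsum ℚ fun u => LinearMap.toSpanSingleton ℚ (V →ₗ[ℚ] V)
    ((Finsupp.lsum ℚ fun v =>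
      LinearMap.toSpanSingleton ℚ V (shW0 (FreeMonoid.toList u) (FreeMonoid.toList v))) ∘ₗ
        (MonoidAlgebra.coeffLinearEquiv ℚ : V ≃ₗ[ℚ] _).toLinearMap)) ∘ₗ
    (MonoidAlgebra.coeffLinearEquiv ℚ : V ≃ₗ[ℚ] _).toLinearMap

/-- The values of `Δ̄₀` on letters: `Δ̄₀(y) = e⊗y + y⊗e`, `Δ̄₀(d) = e⊗d + d⊗e`. -/
noncomputable def dval0 : Letter → (V ⊗[ℚ] V)
  | Letter.y => 1 ⊗ₜ wrd [Letter.y] + wrd [Letter.y] ⊗ₜ 1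
  | Letter.d => 1 ⊗ₜ wrd [Letter.d] + wrd [Letter.d] ⊗ₜ 1

/-- `Δ̄₀ : ℚ⟨L⟩ → ℚ⟨L⟩ ⊗ ℚ⟨L⟩`, the unique morphism of unital ℚ-algebras
(concatenation product on the source, componentwise concatenation on the tensor square)
with the prescribed values on the letters. -/
noncomputable def Delta0 : V →ₐ[ℚ] (V ⊗[ℚ] V) :=
  MonoidAlgebra.lift ℚ (V ⊗[ℚ] V) (FreeMonoid Letter) (FreeMonoid.lift dval0)

/-- The componentwise extension of `⧢₀` to `ℚ⟨L⟩ ⊗ ℚ⟨L⟩`: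
`(a⊗b) ⧢₀ (c⊗d) = (a ⧢₀ c) ⊗ (b ⧢₀ d)`. -/
noncomputable def shT0 (x z : V ⊗[ℚ] V) : V ⊗[ℚ] V :=
  (TensorProduct.map (TensorProduct.lift shL0) (TensorProduct.lift shL0))
    ((TensorProduct.tensorTensorTensorComm ℚ V V V V) (x ⊗ₜ z))

/-- `L₋ ⊆ ℚ⟨L⟩`: the smallest ℚ-subspace containing all elements
`d^k(d(u ⧢₀ v) − (du) ⧢₀ v − u ⧢₀ (dv))` (`k ∈ ℕ₀`, `u, v` words) and closed under
left and right `⧢₀`-multiplication by arbitrary elements of `ℚ⟨L⟩`. -/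
noncomputable def Lminus : Submodule ℚ V :=
  sInf {p : Submodule ℚ V |
    {x : V | ∃ (k : ℕ) (u v : List Letter),
        x = wrd (List.replicate k Letter.d) *
          (wrd [Letter.d] * shL0 (wrd u) (wrd v)
            - shL0 (wrd (Letter.d :: u)) (wrd v)
            - shL0 (wrd u) (wrd (Letter.d :: v)))} ⊆ ↑p ∧
      ∀ x ∈ p, ∀ b : V, shL0 x b ∈ p ∧ shL0 b x ∈ p}

/-!
Induct along the recursion defining `⧢₀`, and write `M = L₋ ⊗ ℚ⟨L⟩ + ℚ⟨L⟩ ⊗ L₋`.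
Since left multiplication by `y` commutes with `⧢₀` in either argument, left multiplication by
`Δ̄₀(y)` commutes with the componentwise product, so the `y`-cases follow from the induction
hypothesis multiplied by `Δ̄₀(y)`. Left multiplication by any `Δ̄₀(l)` preserves `M`, because
`L₋` is stable under left multiplication by letters.

In the `(d, d)`-case, (P3₀) expresses the difference as `Δ̄₀(d)` times one induction hypothesis,
minus another, plus the failure of left multiplication by `Δ̄₀(d)` to be a derivation of the
componentwise product. On pure tensors this failure is `(a ⧢₀ c) ⊗ δ(b, e) + δ(a, c) ⊗ (b ⧢₀ e)`,
where `δ(a, b) = d(a ⧢₀ b) − (da) ⧢₀ b − a ⧢₀ (db)` lies in `L₋` by definition. The same defect,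
together with the generators for `k ≥ 1`, shows that `L₋` is stable under left multiplication
by `d`.
-/
open TensorProduct LinearMap

lemma wrd_nil : wrd [] = 1 := rfl

lemma wrd_append (u v : List Letter) : wrd (u ++ v) = wrd u * wrd v := by
  simp [wrd, MonoidAlgebra.single_mul_single]

lemma lhom_ext_wrd {W : Type*} [AddCommMonoid W] [Module ℚ W] {f g : V →ₗ[ℚ] W}
    (h : ∀ w, f (wrd w) = g (wrd w)) : f = g :=
  MonoidAlgebra.lhom_ext' fun a => LinearMap.ext_ring (h (FreeMonoid.toList a))

lemma bilin_ext_wrd {W : Type*} [AddCommMonoid W] [Module ℚ W] {f g : V →ₗ[ℚ] V →ₗ[ℚ] W}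
    (h : ∀ u v, f (wrd u) (wrd v) = g (wrd u) (wrd v)) : f = g :=
  lhom_ext_wrd fun u => lhom_ext_wrd fun v => h u v

lemma bilin_mem_of_wrd {W : Type*} [AddCommGroup W] [Module ℚ W] {p : Submodule ℚ W}
    (f : V →ₗ[ℚ] V →ₗ[ℚ] W) (h : ∀ u v, f (wrd u) (wrd v) ∈ p) (a b : V) : f a b ∈ p := by
  have : f.compr₂ p.mkQ = 0 :=
    bilin_ext_wrd fun u v => (Submodule.Quotient.mk_eq_zero p).2 (h u v)
  exact (Submodule.Quotient.mk_eq_zero p).1 congr($this a b)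

lemma shL0_wrd (u v : List Letter) : shL0 (wrd u) (wrd v) = shW0 u v := by
  simp [shL0, wrd, MonoidAlgebra.coeffLinearEquiv_apply, MonoidAlgebra.coeff_single]

lemma shW0_nil_right (u : List Letter) : shW0 u [] = wrd u := by
  rcases u with _ | ⟨_ | _, u⟩ <;> simp [shW0]

lemma shW0_y_cons_left (u v : List Letter) :
    shW0 (Letter.y :: u) v = wrd [Letter.y] * shW0 u v := by
  cases v with
  | nil => rw [shW0_nil_right, shW0_nil_right, ← wrd_append]; rfl
  | cons b v => simp [shW0]

lemma shW0_y_cons_right (u v : List Letter) :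
    shW0 u (Letter.y :: v) = wrd [Letter.y] * shW0 u v := by
  induction u with
  | nil => simp [shW0, ← wrd_append]
  | cons a u ih =>
    cases a with
    | y => rw [shW0_y_cons_left, shW0_y_cons_left, ih]
    | d => simp [shW0]

lemma shW0_d_cons_d_cons (u v : List Letter) :
    shW0 (Letter.d :: u) (Letter.d :: v)
      = wrd [Letter.d] * shW0 u (Letter.d :: v) - shW0 u (Letter.d :: Letter.d :: v) := by
  simp [shW0]

lemma shL0_one_left (b : V) : shL0 1 b = b := by
  have : shL0 1 = LinearMap.id := lhom_ext_wrd fun w => by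
    rw [← wrd_nil, shL0_wrd]; simp [shW0]
  rw [this, LinearMap.id_apply]

lemma shL0_one_right (a : V) : shL0 a 1 = a := by
  have : shL0.flip 1 = LinearMap.id := lhom_ext_wrd fun w => by
    rw [flip_apply, ← wrd_nil, shL0_wrd, shW0_nil_right, LinearMap.id_apply]
  exact congr($this a)

lemma shL0_y_mul_left (a b : V) :
    shL0 (wrd [Letter.y] * a) b = wrd [Letter.y] * shL0 a b := by
  have : shL0 ∘ₗ mulLeft ℚ (wrd [Letter.y]) = shL0.compr₂ (mulLeft ℚ (wrd [Letter.y])) :=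
    bilin_ext_wrd fun u v => by
      simp only [comp_apply, compr₂_apply, mulLeft_apply, ← wrd_append, shL0_wrd]
      exact shW0_y_cons_left u v
  exact congr($this a b)

lemma shL0_y_mul_right (a b : V) :
    shL0 a (wrd [Letter.y] * b) = wrd [Letter.y] * shL0 a b := by
  have : shL0.compl₂ (mulLeft ℚ (wrd [Letter.y])) = shL0.compr₂ (mulLeft ℚ (wrd [Letter.y])) :=
    bilin_ext_wrd fun u v => by
      simp only [compl₂_apply, compr₂_apply, mulLeft_apply, ← wrd_append, shL0_wrd]
      exact shW0_y_cons_right u v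
  exact congr($this a b)

section leibnizDefect

variable {A : Type*} [Ring A] [Algebra ℚ A]

def leibnizDefect (μ : A →ₗ[ℚ] A →ₗ[ℚ] A) (δ : A) : A →ₗ[ℚ] A →ₗ[ℚ] A :=
  μ.compr₂ (mulLeft ℚ δ) - μ ∘ₗ mulLeft ℚ δ - μ.compl₂ (mulLeft ℚ δ)

lemma leibnizDefect_apply (μ : A →ₗ[ℚ] A →ₗ[ℚ] A) (δ a b : A) :
    leibnizDefect μ δ a b = δ * μ a b - μ (δ * a) b - μ a (δ * b) := rfl

end leibnizDefect

def LminusGenerators : Set V :=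
  {x : V | ∃ (k : ℕ) (u v : List Letter),
      x = wrd (List.replicate k Letter.d) *
        (wrd [Letter.d] * shL0 (wrd u) (wrd v)
          - shL0 (wrd (Letter.d :: u)) (wrd v)
          - shL0 (wrd u) (wrd (Letter.d :: v)))}

lemma Lminus_le {p : Submodule ℚ V} (hgen : LminusGenerators ⊆ p)
    (hsh : ∀ x ∈ p, ∀ b : V, shL0 x b ∈ p ∧ shL0 b x ∈ p) : Lminus ≤ p :=
  sInf_le ⟨hgen, hsh⟩

lemma LminusGenerators_subset : LminusGenerators ⊆ Lminus := fun _ hx =>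
  Submodule.mem_sInf.2 fun _ hp => hp.1 hx

lemma shL0_mem_Lminus_of_left {x : V} (hx : x ∈ Lminus) (b : V) : shL0 x b ∈ Lminus :=
  Submodule.mem_sInf.2 fun p hp => (hp.2 x (Submodule.mem_sInf.1 hx p hp) b).1

lemma shL0_mem_Lminus_of_right {x : V} (hx : x ∈ Lminus) (b : V) : shL0 b x ∈ Lminus :=
  Submodule.mem_sInf.2 fun p hp => (hp.2 x (Submodule.mem_sInf.1 hx p hp) b).2

lemma leibnizDefect_mem_Lminus (a b : V) : leibnizDefect shL0 (wrd [Letter.d]) a b ∈ Lminus :=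
  bilin_mem_of_wrd _ (fun u v => LminusGenerators_subset
    ⟨0, u, v, by simp only [leibnizDefect_apply, ← wrd_append]; simp [wrd_nil]⟩) a b

lemma y_mul_mem_Lminus {x : V} (hx : x ∈ Lminus) : wrd [Letter.y] * x ∈ Lminus := by
  have h := shL0_mem_Lminus_of_right hx (wrd [Letter.y] * 1)
  rwa [shL0_y_mul_left, shL0_one_left] at h

lemma d_mul_mem_Lminus {x : V} (hx : x ∈ Lminus) : wrd [Letter.d] * x ∈ Lminus := by
  let p : Submodule ℚ V := Lminus ⊓ Lminus.comap (mulLeft ℚ (wrd [Letter.d]))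
  have hp : ∀ z, z ∈ p ↔ z ∈ Lminus ∧ wrd [Letter.d] * z ∈ Lminus := fun _ => Iff.rfl
  suffices Lminus ≤ p from ((hp x).1 (this hx)).2
  refine Lminus_le ?_ fun z hz b => ?_
  · rintro _ ⟨k, u, v, rfl⟩
    refine (hp _).2 ⟨LminusGenerators_subset ⟨k, u, v, rfl⟩, ?_⟩
    rw [← mul_assoc, ← wrd_append]
    exact LminusGenerators_subset ⟨k + 1, u, v, by rw [List.replicate_succ]; rfl⟩
  · obtain ⟨hz, hdz⟩ := (hp z).1 hz
    -- `d` acts on `⧢₀` as a derivation modulo `L₋`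
    have hl := leibnizDefect_mem_Lminus z b
    have hr := leibnizDefect_mem_Lminus b z
    rw [leibnizDefect_apply] at hl hr
    refine ⟨(hp _).2 ⟨shL0_mem_Lminus_of_left hz b, ?_⟩,
      (hp _).2 ⟨shL0_mem_Lminus_of_right hz b, ?_⟩⟩
    · simpa only [sub_add_cancel] using
        add_mem (add_mem hl (shL0_mem_Lminus_of_left hz (wrd [Letter.d] * b)))
          (shL0_mem_Lminus_of_left hdz b)
    · simpa only [sub_add_cancel] using
        add_mem (add_mem hr (shL0_mem_Lminus_of_right hdz b))
          (shL0_mem_Lminus_of_right hz (wrd [Letter.d] * b))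

lemma letter_mul_mem_Lminus (l : Letter) {x : V} (hx : x ∈ Lminus) :
    wrd [l] * x ∈ Lminus := by
  cases l
  · exact d_mul_mem_Lminus hx
  · exact y_mul_mem_Lminus hx

section TensorBilinear

variable {M N P Q : Type*}

lemma TensorProduct.bilin_ext {R W : Type*} [CommSemiring R] [AddCommMonoid M] [AddCommMonoid N]
    [AddCommMonoid P] [AddCommMonoid Q] [AddCommMonoid W] [Module R M] [Module R N] [Module R P]
    [Module R Q] [Module R W] {f g : M ⊗[R] N →ₗ[R] P ⊗[R] Q →ₗ[R] W}
    (h : ∀ a b c e, f (a ⊗ₜ b) (c ⊗ₜ e) = g (a ⊗ₜ b) (c ⊗ₜ e)) : f = g :=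
  TensorProduct.ext' fun a b => TensorProduct.ext' fun c e => h a b c e

lemma TensorProduct.bilin_mem_of_tmul {R W : Type*} [CommRing R] [AddCommMonoid M]
    [AddCommMonoid N] [AddCommMonoid P] [AddCommMonoid Q] [AddCommGroup W] [Module R M]
    [Module R N] [Module R P] [Module R Q] [Module R W] {p : Submodule R W}
    (f : M ⊗[R] N →ₗ[R] P ⊗[R] Q →ₗ[R] W)
    (h : ∀ a b c e, f (a ⊗ₜ b) (c ⊗ₜ e) ∈ p) (X : M ⊗[R] N) (Z : P ⊗[R] Q) : f X Z ∈ p := by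
  have : f.compr₂ p.mkQ = 0 :=
    TensorProduct.bilin_ext fun a b c e => (Submodule.Quotient.mk_eq_zero p).2 (h a b c e)
  exact (Submodule.Quotient.mk_eq_zero p).1 congr($this X Z)

end TensorBilinear

noncomputable def shTL : V ⊗[ℚ] V →ₗ[ℚ] V ⊗[ℚ] V →ₗ[ℚ] V ⊗[ℚ] V :=
  (TensorProduct.mk ℚ _ _).compr₂
    (map (lift shL0) (lift shL0) ∘ₗ (tensorTensorTensorComm ℚ V V V V).toLinearMap)

lemma shT0_eq_shTL (X Z : V ⊗[ℚ] V) : shT0 X Z = shTL X Z := rfl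

lemma shTL_tmul (a b c e : V) : shTL (a ⊗ₜ b) (c ⊗ₜ e) = shL0 a c ⊗ₜ shL0 b e := by
  simp [shTL]

lemma dval0_mul_tmul (l : Letter) (a b : V) :
    dval0 l * (a ⊗ₜ b) = a ⊗ₜ (wrd [l] * b) + (wrd [l] * a) ⊗ₜ b := by
  cases l <;> simp [dval0, add_mul, Algebra.TensorProduct.tmul_mul_tmul]

lemma shT0_one_left (Z : V ⊗[ℚ] V) : shT0 1 Z = Z := by
  have : shTL 1 = LinearMap.id := TensorProduct.ext' fun c e => by
    rw [Algebra.TensorProduct.one_def, shTL_tmul, shL0_one_left, shL0_one_left, id_apply]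
  exact congr($this Z)

lemma shT0_one_right (X : V ⊗[ℚ] V) : shT0 X 1 = X := by
  have : shTL.flip 1 = LinearMap.id := TensorProduct.ext' fun a b => by
    rw [flip_apply, Algebra.TensorProduct.one_def, shTL_tmul, shL0_one_right, shL0_one_right,
      id_apply]
  exact congr($this X)

lemma shT0_dval0_y_mul_left (X Z : V ⊗[ℚ] V) :
    shT0 (dval0 Letter.y * X) Z = dval0 Letter.y * shT0 X Z := by
  have : shTL ∘ₗ mulLeft ℚ (dval0 Letter.y) = shTL.compr₂ (mulLeft ℚ (dval0 Letter.y)) :=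
    TensorProduct.bilin_ext fun a b c e => by
      simp only [comp_apply, compr₂_apply, mulLeft_apply, dval0_mul_tmul, map_add,
        LinearMap.add_apply, shTL_tmul, shL0_y_mul_left]
  exact congr($this X Z)

lemma shT0_dval0_y_mul_right (X Z : V ⊗[ℚ] V) :
    shT0 X (dval0 Letter.y * Z) = dval0 Letter.y * shT0 X Z := by
  have : shTL.compl₂ (mulLeft ℚ (dval0 Letter.y)) = shTL.compr₂ (mulLeft ℚ (dval0 Letter.y)) :=
    TensorProduct.bilin_ext fun a b c e => by
      simp only [compl₂_apply, compr₂_apply, mulLeft_apply, dval0_mul_tmul, map_add,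
        shTL_tmul, shL0_y_mul_right]
  exact congr($this X Z)

lemma Delta0_wrd_singleton (l : Letter) : Delta0 (wrd [l]) = dval0 l := by
  simp [Delta0, wrd, MonoidAlgebra.lift_single]

lemma Delta0_cons (l : Letter) (w : List Letter) :
    Delta0 (wrd (l :: w)) = dval0 l * Delta0 (wrd w) := by
  rw [← List.singleton_append, wrd_append, map_mul, Delta0_wrd_singleton]

noncomputable def LminusTensor : Submodule ℚ (V ⊗[ℚ] V) :=
  LinearMap.range (TensorProduct.map Lminus.subtype (LinearMap.id : V →ₗ[ℚ] V)) ⊔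
    LinearMap.range (TensorProduct.map (LinearMap.id : V →ₗ[ℚ] V) Lminus.subtype)

lemma tmul_mem_LminusTensor_of_left {x : V} (hx : x ∈ Lminus) (b : V) :
    x ⊗ₜ b ∈ LminusTensor :=
  Submodule.mem_sup_left ⟨⟨x, hx⟩ ⊗ₜ b, rfl⟩

lemma tmul_mem_LminusTensor_of_right (a : V) {x : V} (hx : x ∈ Lminus) :
    a ⊗ₜ x ∈ LminusTensor :=
  Submodule.mem_sup_right ⟨a ⊗ₜ ⟨x, hx⟩, rfl⟩

lemma LminusTensor_le_comap {f : V ⊗[ℚ] V →ₗ[ℚ] V ⊗[ℚ] V}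
    (hl : ∀ x ∈ Lminus, ∀ b, f (x ⊗ₜ b) ∈ LminusTensor)
    (hr : ∀ a, ∀ x ∈ Lminus, f (a ⊗ₜ x) ∈ LminusTensor) :
    LminusTensor ≤ LminusTensor.comap f := by
  refine sup_le ?_ ?_ <;> rw [range_map_eq_span_tmul, Submodule.span_le]
  · rintro _ ⟨x, b, rfl⟩
    exact hl x x.2 b
  · rintro _ ⟨a, x, rfl⟩
    exact hr a x x.2

lemma dval0_mul_mem_LminusTensor (l : Letter) {X : V ⊗[ℚ] V} (hX : X ∈ LminusTensor) :
    dval0 l * X ∈ LminusTensor := by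
  refine LminusTensor_le_comap (f := mulLeft ℚ (dval0 l)) (fun x hx b => ?_)
    (fun a x hx => ?_) hX
  · rw [mulLeft_apply, dval0_mul_tmul]
    exact add_mem (tmul_mem_LminusTensor_of_left hx _)
      (tmul_mem_LminusTensor_of_left (letter_mul_mem_Lminus l hx) b)
  · rw [mulLeft_apply, dval0_mul_tmul]
    exact add_mem (tmul_mem_LminusTensor_of_right a (letter_mul_mem_Lminus l hx))
      (tmul_mem_LminusTensor_of_right _ hx)

lemma leibnizDefect_shTL_mem_LminusTensor (X Z : V ⊗[ℚ] V) :
    leibnizDefect shTL (dval0 Letter.d) X Z ∈ LminusTensor := by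
  refine TensorProduct.bilin_mem_of_tmul _ (fun a b c e => ?_) X Z
  have : leibnizDefect shTL (dval0 Letter.d) (a ⊗ₜ b) (c ⊗ₜ e)
      = shL0 a c ⊗ₜ leibnizDefect shL0 (wrd [Letter.d]) b e
        + leibnizDefect shL0 (wrd [Letter.d]) a c ⊗ₜ shL0 b e := by
    simp only [leibnizDefect_apply, dval0_mul_tmul, map_add, LinearMap.add_apply, shTL_tmul,
      tmul_sub, sub_tmul]
    abel
  rw [this]
  exact add_mem (tmul_mem_LminusTensor_of_right _ (leibnizDefect_mem_Lminus b e))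
    (tmul_mem_LminusTensor_of_left (leibnizDefect_mem_Lminus a c) _)

/-- For all words `u, v`:
`Δ̄₀(u ⧢₀ v) − Δ̄₀(u) ⧢₀ Δ̄₀(v) ∈ L₋ ⊗ ℚ⟨L⟩ + ℚ⟨L⟩ ⊗ L₋`. -/
theorem stmt_14 (u v : List Letter) :
    Delta0 (shL0 (wrd u) (wrd v)) - shT0 (Delta0 (wrd u)) (Delta0 (wrd v)) ∈
      LinearMap.range (TensorProduct.map Lminus.subtype (LinearMap.id : V →ₗ[ℚ] V)) ⊔
        LinearMap.range (TensorProduct.map (LinearMap.id : V →ₗ[ℚ] V) Lminus.subtype) := by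
  change _ ∈ LminusTensor
  induction u, v using shW0.induct with
  | case1 v =>
    rw [wrd_nil, shL0_one_left, map_one, shT0_one_left, sub_self]
    exact zero_mem _
  | case2 l u =>
    rw [wrd_nil, shL0_one_right, map_one, shT0_one_right, sub_self]
    exact zero_mem _
  | case3 u v _ ih =>
    rw [shL0_wrd, shW0_y_cons_left, ← shL0_wrd, map_mul, Delta0_wrd_singleton, Delta0_cons,
      shT0_dval0_y_mul_left, ← mul_sub]
    exact dval0_mul_mem_LminusTensor _ ih
  | case4 u v ih =>
    rw [shL0_wrd, shW0_y_cons_right, ← shL0_wrd, map_mul, Delta0_wrd_singleton,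
      Delta0_cons Letter.y, shT0_dval0_y_mul_right, ← mul_sub]
    exact dval0_mul_mem_LminusTensor _ ih
  | case5 u v ih₁ ih₂ =>
    rw [Delta0_cons Letter.d (Letter.d :: v)] at ih₂
    rw [shL0_wrd, shW0_d_cons_d_cons, ← shL0_wrd, ← shL0_wrd, map_sub, map_mul,
      Delta0_wrd_singleton, Delta0_cons Letter.d u]
    convert add_mem (sub_mem (dval0_mul_mem_LminusTensor Letter.d ih₁) ih₂)
      (leibnizDefect_shTL_mem_LminusTensor (Delta0 (wrd u)) (Delta0 (wrd (Letter.d :: v))))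
      using 1
    rw [leibnizDefect_apply, ← shT0_eq_shTL, ← shT0_eq_shTL, ← shT0_eq_shTL, mul_sub]
    abel
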